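/- Let σ be the positively p-homogeneous activation with parameters p ≥ 2 and α > β ≥ 0, and let Z ~ N(0, v²) and U ~ N(0, w²) be independent centered Gaussian random variables. Then for every λ ∈ ℝ, E[U σ(−λ U σ'(Z))] = −sign(λ) |λ|^p · E[sign(Z) |σ'(Z)|^p] · E[U σ(U)]. -/
import Mathlib


open MeasureTheory ProbabilityTheory

/-- The positively `p`-homogeneous activation: `σ(z) = α z^p` for `z ≥ 0`,
`σ(z) = β (−z)^p` for `z < 0`. -/
noncomputable def act (α β p z : ℝ) : ℝ := if 0 ≤ z then α * z ^ p else β * (-z) ^ p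

/-- Its derivative: `σ'(z) = α p z^{p−1}` for `z ≥ 0`, `σ'(z) = −β p (−z)^{p−1}` for `z < 0`. -/
noncomputable def actD (α β p z : ℝ) : ℝ :=
  if 0 ≤ z then α * p * z ^ (p - 1) else -(β * p * (-z) ^ (p - 1))

section Aux

open Real Set

lemma measurable_act (α β p : ℝ) : Measurable (act α β p) := by
  unfold act
  exact Measurable.ite measurableSet_Ici
    ((measurable_id.pow measurable_const).const_mul α)
    ((measurable_id.neg.pow measurable_const).const_mul β)

lemma measurable_actD (α β p : ℝ) : Measurable (actD α β p) := by
  unfold actD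
  exact Measurable.ite measurableSet_Ici
    ((measurable_id.pow measurable_const).const_mul _)
    (((measurable_id.neg.pow measurable_const).const_mul _).neg)

lemma act_const_mul {p : ℝ} (hp : p ≠ 0) (α β : ℝ) {c : ℝ} (hc : 0 ≤ c) (u : ℝ) :
    act α β p (c * u) = c ^ p * act α β p u := by
  rcases hc.eq_or_lt with rfl | hc
  · simp [act, Real.zero_rpow hp]
  · unfold act
    rcases le_or_gt 0 u with hu | hu
    · rw [if_pos (by positivity), if_pos hu, Real.mul_rpow hc.le hu]; ring
    · rw [if_neg (not_le.mpr (mul_neg_of_pos_of_neg hc hu)), if_neg (not_le.mpr hu),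
        show -(c * u) = c * (-u) by ring, Real.mul_rpow hc.le (by linarith)]
      ring

lemma gauss_map_neg (v : NNReal) :
    (gaussianReal 0 v).map (fun x => -x) = gaussianReal 0 v := by
  have h := gaussianReal_map_const_mul (μ := 0) (v := v) (-1)
  have h2 : (fun x : ℝ => -x) = ((-1 : ℝ) * ·) := by funext x; ring
  rw [h2, h]
  norm_num

lemma integrable_abs_rpow_mul_exp {b q : ℝ} (hb : 0 < b) (hq : 0 ≤ q) :
    Integrable fun x : ℝ => |x| ^ q * Real.exp (-b * x ^ 2) := by
  have hIoi : IntegrableOn (fun x : ℝ => |x| ^ q * Real.exp (-b * x ^ 2)) (Ioi 0) := by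
    refine (integrableOn_rpow_mul_exp_neg_mul_sq hb (by linarith : (-1:ℝ) < q)).congr_fun
      (fun x hx => ?_) measurableSet_Ioi
    rw [abs_of_pos hx]
  rw [← integrableOn_univ, ← Iio_union_Ici (a := (0:ℝ)), integrableOn_union,
    integrableOn_Ici_iff_integrableOn_Ioi]
  refine ⟨?_, hIoi⟩
  rw [← (Measure.measurePreserving_neg (volume : Measure ℝ)).integrableOn_comp_preimage
      (Homeomorph.neg ℝ).measurableEmbedding]
  simp only [Function.comp_def, abs_neg, neg_sq, neg_preimage, neg_Iio, neg_neg, neg_zero]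
  exact hIoi

lemma integrable_abs_rpow_gaussian {q : ℝ} (hq : 0 ≤ q) (v : NNReal) :
    Integrable (fun x => |x| ^ q) (gaussianReal 0 v) := by
  rcases eq_or_ne v 0 with rfl | hv
  · rw [gaussianReal_zero_var]
    exact (integrable_const _).congr (MeasureTheory.ae_eq_dirac (fun x : ℝ => |x| ^ q)).symm
  · rw [gaussianReal_of_var_ne_zero _ hv,
      integrable_withDensity_iff (measurable_gaussianPDF _ _)
        (ae_of_all _ fun x => ENNReal.ofReal_lt_top)]
    have hpdf : ∀ x : ℝ, (gaussianPDF 0 v x).toReal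
        = (Real.sqrt (2 * π * v))⁻¹ * Real.exp (-(2 * (v:ℝ))⁻¹ * x ^ 2) := by
      intro x
      rw [gaussianPDF, ENNReal.toReal_ofReal (gaussianPDFReal_nonneg _ _ _), gaussianPDFReal]
      ring_nf
    simp_rw [hpdf]
    have hb : 0 < (2 * (v:ℝ))⁻¹ := by
      have hv' : (0:ℝ) < v := by exact_mod_cast pos_iff_ne_zero.mpr hv
      positivity
    refine ((integrable_abs_rpow_mul_exp hb hq).const_mul (Real.sqrt (2 * π * v))⁻¹).congr ?_
    filter_upwards with x
    ring

lemma sign_mul_abs_rpow {p : ℝ} (hp : p ≠ 0) (a b : ℝ) :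
    Real.sign (a * b) * |a * b| ^ p
      = (Real.sign a * |a| ^ p) * (Real.sign b * |b| ^ p) := by
  rcases eq_or_ne a 0 with rfl | ha
  · simp [Real.sign_zero, Real.zero_rpow hp]
  rcases eq_or_ne b 0 with rfl | hb
  · simp [Real.sign_zero, Real.zero_rpow hp]
  have habs : |a * b| ^ p = |a| ^ p * |b| ^ p := by
    rw [abs_mul, Real.mul_rpow (abs_nonneg a) (abs_nonneg b)]
  rcases ha.lt_or_gt with ha' | ha' <;> rcases hb.lt_or_gt with hb' | hb'
  · rw [Real.sign_of_pos (mul_pos_of_neg_of_neg ha' hb'), Real.sign_of_neg ha',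
      Real.sign_of_neg hb', habs]; ring
  · rw [Real.sign_of_neg (mul_neg_of_neg_of_pos ha' hb'), Real.sign_of_neg ha',
      Real.sign_of_pos hb', habs]; ring
  · rw [Real.sign_of_neg (mul_neg_of_pos_of_neg ha' hb'), Real.sign_of_pos ha',
      Real.sign_of_neg hb', habs]; ring
  · rw [Real.sign_of_pos (mul_pos ha' hb'), Real.sign_of_pos ha',
      Real.sign_of_pos hb', habs]; ring

lemma actD_sign {p α β : ℝ} (hp : 2 ≤ p) (hβ : 0 ≤ β) (hαβ : β < α) (z : ℝ) :
    Real.sign (actD α β p z) * |actD α β p z| ^ p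
      = Real.sign z * |actD α β p z| ^ p := by
  have hp0 : p ≠ 0 := by linarith
  have hp1 : p - 1 ≠ 0 := by intro h; nlinarith [h]
  have hα : 0 < α := lt_of_le_of_lt hβ hαβ
  rcases lt_trichotomy z 0 with hz | rfl | hz
  · rw [show actD α β p z = -(β * p * (-z) ^ (p-1)) from if_neg (not_le.mpr hz)]
    rcases hβ.eq_or_lt with rfl | hb
    · simp [Real.zero_rpow hp0]
    · have hpos : 0 < β * p * (-z) ^ (p-1) := by
        have := Real.rpow_pos_of_pos (show (0:ℝ) < -z by linarith) (p-1)
        positivity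
      simp [Real.sign_of_neg (neg_neg_iff_pos.mpr hpos), Real.sign_of_neg hz]
  · rw [show actD α β p 0 = 0 by simp [actD, Real.zero_rpow hp1]]
  · have hpos : 0 < actD α β p z := by
      rw [show actD α β p z = α * p * z ^ (p-1) from if_pos hz.le]
      have := Real.rpow_pos_of_pos hz (p-1)
      positivity
    rw [Real.sign_of_pos hpos, Real.sign_of_pos hz]

lemma inner_int {p : ℝ} (hp : p ≠ 0) (α β : ℝ) (w : NNReal) (c : ℝ) :
    ∫ u, u * act α β p (c * u) ∂(gaussianReal 0 w)
      = Real.sign c * |c| ^ p * ∫ u, u * act α β p u ∂(gaussianReal 0 w) := by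
  rcases lt_trichotomy c 0 with hc | rfl | hc
  · have key : ∀ u : ℝ, u * act α β p (c * u) = (-c) ^ p * (u * act α β p (-u)) := by
      intro u
      rw [show c * u = (-c) * (-u) by ring, act_const_mul hp α β (by linarith : (0:ℝ) ≤ -c)]
      ring
    simp_rw [key]
    rw [MeasureTheory.integral_const_mul]
    have hmeas : Measurable fun u : ℝ => u * act α β p (-u) :=
      measurable_id.mul ((measurable_act α β p).comp measurable_neg)
    have hsym : ∫ u, u * act α β p (-u) ∂(gaussianReal 0 w)
        = ∫ u, (-u) * act α β p u ∂(gaussianReal 0 w) := by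
      calc ∫ u, u * act α β p (-u) ∂(gaussianReal 0 w)
          = ∫ u, u * act α β p (-u) ∂((gaussianReal 0 w).map (fun x => -x)) := by
            rw [gauss_map_neg]
        _ = ∫ u, (-u) * act α β p (-(-u)) ∂(gaussianReal 0 w) := by
            rw [integral_map measurable_neg.aemeasurable hmeas.aestronglyMeasurable]
        _ = ∫ u, (-u) * act α β p u ∂(gaussianReal 0 w) := by simp only [neg_neg]
    rw [hsym]
    simp_rw [neg_mul]
    rw [integral_neg, Real.sign_of_neg hc, abs_of_neg hc]
    ring
  · simp [act, Real.zero_rpow hp, Real.sign_zero]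
  · have key : ∀ u : ℝ, u * act α β p (c * u) = c ^ p * (u * act α β p u) := by
      intro u; rw [act_const_mul hp α β hc.le]; ring
    simp_rw [key]
    rw [MeasureTheory.integral_const_mul, Real.sign_of_pos hc, abs_of_pos hc]
    ring

end Aux

section Main

open Real

lemma abs_act_le {p α β : ℝ} (hβ : 0 ≤ β) (hβα : β ≤ α) (x : ℝ) :
    |act α β p x| ≤ α * |x| ^ p := by
  have hα : 0 ≤ α := hβ.trans hβα
  unfold act; split_ifs with h
  · have h1 : (0:ℝ) ≤ x ^ p := Real.rpow_nonneg h p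
    rw [abs_of_nonneg (by positivity), abs_of_nonneg h]
  · push_neg at h
    have h1 : (0:ℝ) ≤ (-x) ^ p := Real.rpow_nonneg (by linarith) p
    rw [abs_of_nonneg (by positivity), abs_of_neg h]
    exact mul_le_mul_of_nonneg_right hβα h1

lemma abs_actD_le {p α β : ℝ} (hβ : 0 ≤ β) (hβα : β ≤ α) (hp : 0 ≤ p) (z : ℝ) :
    |actD α β p z| ≤ α * p * |z| ^ (p - 1) := by
  have hα : 0 ≤ α := hβ.trans hβα
  unfold actD; split_ifs with h
  · have h1 : (0:ℝ) ≤ z ^ (p-1) := Real.rpow_nonneg h _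
    rw [abs_of_nonneg (by positivity), abs_of_nonneg h]
  · push_neg at h
    have h1 : (0:ℝ) ≤ (-z) ^ (p-1) := Real.rpow_nonneg (by linarith) _
    rw [abs_neg, abs_of_nonneg (by positivity), abs_of_neg h]
    have : β * p * (-z) ^ (p-1) ≤ α * p * (-z) ^ (p-1) := by
      apply mul_le_mul_of_nonneg_right _ h1
      exact mul_le_mul_of_nonneg_right hβα hp
    exact this

lemma abs_mul_abs_rpow {p : ℝ} (hp : 2 ≤ p) (u : ℝ) : |u| * |u| ^ p = |u| ^ (p + 1) := by
  rcases eq_or_ne u 0 with rfl | hu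
  · simp [Real.zero_rpow (show p ≠ 0 by linarith), Real.zero_rpow (show p + 1 ≠ 0 by linarith)]
  · rw [Real.rpow_add (abs_pos.mpr hu), Real.rpow_one]; ring

lemma integrable_main {p α β : ℝ} (hp : 2 ≤ p) (hβ : 0 ≤ β) (hαβ : β < α)
    (v w : NNReal) (lam : ℝ) :
    Integrable (fun zu : ℝ × ℝ => zu.2 * act α β p (-lam * zu.2 * actD α β p zu.1))
      ((gaussianReal 0 (v ^ 2)).prod (gaussianReal 0 (w ^ 2))) := by
  have hα : 0 ≤ α := le_of_lt (lt_of_le_of_lt hβ hαβ)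
  have hp0 : 0 ≤ p := by linarith
  have hg : Integrable (fun z => |actD α β p z| ^ p) (gaussianReal 0 (v ^ 2)) := by
    refine Integrable.mono'
      ((integrable_abs_rpow_gaussian (q := (p-1)*p) (by nlinarith) (v ^ 2)).const_mul
        ((α*p)^p)) ?_ ?_
    · exact ((measurable_actD α β p).abs.pow measurable_const).aestronglyMeasurable
    · filter_upwards with z
      rw [Real.norm_eq_abs, abs_of_nonneg (Real.rpow_nonneg (abs_nonneg _) _)]
      calc |actD α β p z| ^ p ≤ (α * p * |z| ^ (p-1)) ^ p :=
            Real.rpow_le_rpow (abs_nonneg _) (abs_actD_le hβ hαβ.le hp0 z) hp0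
        _ = (α*p)^p * |z| ^ ((p-1)*p) := by
            rw [Real.mul_rpow (by positivity) (Real.rpow_nonneg (abs_nonneg _) _),
              ← Real.rpow_mul (abs_nonneg z)]
  have hh : Integrable (fun u => |u| ^ (p+1)) (gaussianReal 0 (w ^ 2)) :=
    integrable_abs_rpow_gaussian (by linarith) _
  refine ((hg.mul_prod hh).const_mul (α * |lam| ^ p)).mono' ?_ ?_
  · exact (measurable_snd.mul ((measurable_act α β p).comp
      ((measurable_const.mul measurable_snd).mul
        ((measurable_actD α β p).comp measurable_fst)))).aestronglyMeasurable
  · filter_upwards with zu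
    obtain ⟨z, u⟩ := zu
    rw [Real.norm_eq_abs, abs_mul]
    have habs : |(-lam * u * actD α β p z)| ^ p
        = |lam| ^ p * |u| ^ p * |actD α β p z| ^ p := by
      rw [abs_mul, abs_mul, abs_neg,
        Real.mul_rpow (mul_nonneg (abs_nonneg _) (abs_nonneg _)) (abs_nonneg _),
        Real.mul_rpow (abs_nonneg _) (abs_nonneg _)]
    calc |u| * |act α β p (-lam * u * actD α β p z)|
        ≤ |u| * (α * |(-lam * u * actD α β p z)| ^ p) :=
          mul_le_mul_of_nonneg_left (abs_act_le hβ hαβ.le _) (abs_nonneg u)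
      _ = α * |lam| ^ p * (|actD α β p z| ^ p * |u| ^ (p+1)) := by
          rw [habs, ← abs_mul_abs_rpow hp u]; ring

end Main

/-- For independent `Z ~ N(0, v²)`, `U ~ N(0, w²)` (encoded by the product
measure) and any `λ ∈ ℝ`:
`E[U σ(−λ U σ'(Z))] = −sign(λ) |λ|^p E[sign(Z)|σ'(Z)|^p] E[U σ(U)]`. -/
theorem stmt_9 (p α β : ℝ) (hp : 2 ≤ p) (hβ : 0 ≤ β) (hαβ : β < α)
    (v w : NNReal) (lam : ℝ) :
    (∫ zu : ℝ × ℝ, zu.2 * act α β p (-lam * zu.2 * actD α β p zu.1)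
        ∂((gaussianReal 0 (v ^ 2)).prod (gaussianReal 0 (w ^ 2)))) =
      -Real.sign lam * |lam| ^ p *
        (∫ z, Real.sign z * |actD α β p z| ^ p ∂(gaussianReal 0 (v ^ 2))) *
        ∫ u, u * act α β p u ∂(gaussianReal 0 (w ^ 2)) := by
  have hp0 : p ≠ 0 := by linarith
  rw [MeasureTheory.integral_prod _ (integrable_main hp hβ hαβ v w lam)]
  have hinner : ∀ z : ℝ,
      (∫ u, u * act α β p (-lam * u * actD α β p z) ∂(gaussianReal 0 (w ^ 2)))
        = (-Real.sign lam * |lam| ^ p) * ((Real.sign z * |actD α β p z| ^ p) *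
            ∫ u, u * act α β p u ∂(gaussianReal 0 (w ^ 2))) := by
    intro z
    have harg : ∀ u : ℝ, -lam * u * actD α β p z = ((-lam) * actD α β p z) * u := by
      intro u; ring
    simp_rw [harg]
    rw [inner_int hp0 α β (w ^ 2) _]
    rw [sign_mul_abs_rpow hp0 (-lam) (actD α β p z), actD_sign hp hβ hαβ z]
    rw [Real.sign_neg, abs_neg]
    ring
  simp_rw [hinner]
  rw [MeasureTheory.integral_const_mul, MeasureTheory.integral_mul_const]
  ring
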